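/- For all complex numbers x, y and natural numbers n, the sum over k from 0 to n of x^k * (y * L_{2k}(y) + (x*(y^2+2) - 2) * F_{2k+2}(y)) equals x^(n+1) * (y^2 + 2) * F_{2n+2}(y), where F_n(y) and L_n(y) are the Fibonacci and Lucas polynomials. -/
import Mathlib

open Finset

noncomputable def fibP (y : ℂ) : ℕ → ℂ
  | 0 => 0
  | 1 => 1
  | n + 2 => y * fibP y (n + 1) + fibP y n

noncomputable def lucasP (y : ℂ) : ℕ → ℂ
  | 0 => 2
  | 1 => y
  | n + 2 => y * lucasP y (n + 1) + lucasP y n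

lemma key (y : ℂ) : ∀ m, y * lucasP y m + (y ^ 2 + 2) * fibP y m = 2 * fibP y (m + 2)
  | 0 => by simp [fibP, lucasP]; ring
  | 1 => by simp [fibP, lucasP]; ring
  | m + 2 => by
    have h1 := key y m
    have h2 := key y (m + 1)
    simp only [fibP, lucasP] at *
    ring_nf at *
    linear_combination y * h2 + h1

theorem stmt14 (x y : ℂ) (n : ℕ) :
    ∑ k ∈ Finset.range (n + 1),
        x ^ k * (y * lucasP y (2 * k) + (x * (y ^ 2 + 2) - 2) * fibP y (2 * k + 2)) =
      x ^ (n + 1) * (y ^ 2 + 2) * fibP y (2 * n + 2) := by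
  induction n with
  | zero => simp [fibP, lucasP]; ring
  | succ n ih =>
    rw [Finset.sum_range_succ, ih]
    have h := key y (2 * (n + 1))
    have e : 2 * (n + 1) + 2 = 2 * n + 2 + 2 := by ring
    have e2 : 2 * (n + 1) = 2 * n + 2 := by ring
    rw [e2] at h ⊢
    linear_combination (x ^ (n + 1)) * h
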